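/- arXiv:2002.11537 — 5 statements merged into one kernel-verified Lean document; each statement's English description precedes it below -/
import Mathlib

section
/- Let A be an n×n invertible real matrix such that both A and its inverse A⁻¹ have all entries non-negative. Then A is a scaled permutation matrix, i.e., each row of A has exactly one non-zero entry. -/
/-- An invertible real matrix `A` such that both `A` and `A⁻¹` have all entries
non-negative is a scaled permutation matrix: each row has exactly one non-zero entry. -/
theorem nonneg_inverse_nonneg_scaled_perm {n : ℕ} (A : Matrix (Fin n) (Fin n) ℝ)
    (hA : IsUnit A.det)
    (hpos : ∀ i j, 0 ≤ A i j) (hinvpos : ∀ i j, 0 ≤ A⁻¹ i j) :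
    ∀ i, ∃! j, A i j ≠ 0 := by
  have hAinv : A * A⁻¹ = 1 := Matrix.mul_nonsing_inv A hA
  have hinvA : A⁻¹ * A = 1 := Matrix.nonsing_inv_mul A hA
  intro i
  -- existence of a nonzero entry in row i
  have hex : ∃ j, A i j ≠ 0 := by
    by_contra h
    push_neg at h
    have h0 : (A * A⁻¹) i i = 0 := by simp [Matrix.mul_apply, h]
    rw [hAinv] at h0
    simp [Matrix.one_apply] at h0
  obtain ⟨j, hj⟩ := hex
  -- key: if A i k ≠ 0 and A⁻¹ k m ≠ 0 then m = i
  have key : ∀ k m, A i k ≠ 0 → A⁻¹ k m ≠ 0 → m = i := by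
    intro k m hk hm
    by_contra hne
    have h1 : 0 < A i k * A⁻¹ k m :=
      mul_pos (lt_of_le_of_ne (hpos i k) (Ne.symm hk))
        (lt_of_le_of_ne (hinvpos k m) (Ne.symm hm))
    have h2 : A i k * A⁻¹ k m ≤ (A * A⁻¹) i m := by
      rw [Matrix.mul_apply]
      exact Finset.single_le_sum (fun l _ => mul_nonneg (hpos i l) (hinvpos l m))
        (Finset.mem_univ k)
    rw [hAinv] at h2
    rw [Matrix.one_apply_ne (fun h => hne h.symm)] at h2
    linarith
  -- if A i k ≠ 0 then A⁻¹ k i > 0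
  have hcol : ∀ k, A i k ≠ 0 → 0 < A⁻¹ k i := by
    intro k hk
    have hex2 : ∃ m, A⁻¹ k m ≠ 0 := by
      by_contra h
      push_neg at h
      have h0 : (A⁻¹ * A) k k = 0 := by simp [Matrix.mul_apply, h]
      rw [hinvA] at h0
      simp [Matrix.one_apply] at h0
    obtain ⟨m, hm⟩ := hex2
    have := key k m hk hm
    subst this
    exact lt_of_le_of_ne (hinvpos k m) (Ne.symm hm)
  refine ⟨j, hj, fun k hk => ?_⟩
  by_contra hne
  have h1 : 0 < A⁻¹ k i * A i j :=
    mul_pos (hcol k hk) (lt_of_le_of_ne (hpos i j) (Ne.symm hj))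
  have h2 : A⁻¹ k i * A i j ≤ (A⁻¹ * A) k j := by
    rw [Matrix.mul_apply]
    exact Finset.single_le_sum (fun l _ => mul_nonneg (hinvpos k l) (hpos l j))
      (Finset.mem_univ i)
  rw [hinvA, Matrix.one_apply_ne hne] at h2
  linarith
end

section
/- Consider an MLP f : ℝ^{d₀} → ℝ^{d_L} with LeakyReLU activations (slope α ∈ (0,1)), full-rank weight matrices, and monotone layer dimensions (all non-increasing or all non-decreasing). Then there is a set N ⊂ ℝ^{d₀} of Lebesgue measure zero such that f is differentiable on ℝ^{d₀} \ N and its Jacobian is full rank at every point of ℝ^{d₀} \ N. -/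
open MeasureTheory Module

/-- LeakyReLU with slope `l`. -/
noncomputable def leakyReLU (l : ℝ) (y : ℝ) : ℝ := max 0 y + l * min 0 y

/-- An MLP with LeakyReLU activations: `x⁰ = x`, `x^{l+1} = h(W_l x^l + b_l)`. -/
noncomputable def mlp (lam : ℝ) (dims : ℕ → ℕ)
    (W : ∀ l : ℕ, Matrix (Fin (dims (l + 1))) (Fin (dims l)) ℝ)
    (b : ∀ l : ℕ, Fin (dims (l + 1)) → ℝ) :
    (L : ℕ) → (Fin (dims 0) → ℝ) → Fin (dims L) → ℝ
  | 0 => fun x => x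
  | L + 1 => fun x i => leakyReLU lam ((W L).mulVec (mlp lam dims W b L x) i + b L i)

/-- A chain of one-step inequalities gives `f 0 ≤ f j`. -/
lemma mlpAux_chain_le {f : ℕ → ℕ} {K : ℕ} (h : ∀ l < K, f l ≤ f (l + 1)) :
    ∀ j ≤ K, f 0 ≤ f j := by
  intro j
  induction j with
  | zero => intro _; exact le_rfl
  | succ n ih =>
      intro hn
      exact (ih (Nat.le_of_succ_le hn)).trans (h n (Nat.lt_of_succ_le hn))

lemma mlpAux_chain_ge {f : ℕ → ℕ} {K : ℕ} (h : ∀ l < K, f (l + 1) ≤ f l) :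
    ∀ j ≤ K, f j ≤ f 0 := by
  intro j
  induction j with
  | zero => intro _; exact le_rfl
  | succ n ih =>
      intro hn
      exact (h n (Nat.lt_of_succ_le hn)).trans (ih (Nat.le_of_succ_le hn))

/-- A level set of a nonzero linear functional has measure zero. -/
lemma mlpAux_volume_levelSet {n : ℕ} (l : (Fin n → ℝ) →ₗ[ℝ] ℝ) (hl : l ≠ 0) (d : ℝ) :
    volume {y | l y = d} = 0 := by
  by_cases hne : ({y | l y = d} : Set (Fin n → ℝ)).Nonempty
  · obtain ⟨y₀, hy₀⟩ := hne
    have hy₀' : l y₀ = d := hy₀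
    have hker : LinearMap.ker l ≠ ⊤ := by
      rw [Ne, LinearMap.ker_eq_top]; exact hl
    have hset : {y | l y = d} = (fun y => y + (-y₀)) ⁻¹' ((LinearMap.ker l : Submodule ℝ _) :
        Set (Fin n → ℝ)) := by
      ext y
      simp only [Set.mem_setOf_eq, Set.mem_preimage, SetLike.mem_coe, LinearMap.mem_ker,
        map_add, map_neg, hy₀']
      constructor
      · intro h; rw [h]; ring
      · intro h; linarith
    rw [hset, measure_preimage_add_right]
    exact Measure.addHaar_submodule _ _ hker
  · rw [Set.not_nonempty_iff_eq_empty] at hne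
    simp [hne]

lemma mlpAux_injective_of_rank {m n : ℕ} (A : Matrix (Fin m) (Fin n) ℝ) (h : A.rank = n) :
    Function.Injective A.mulVecLin := by
  rw [← LinearMap.ker_eq_bot]
  have h1 := LinearMap.finrank_range_add_finrank_ker A.mulVecLin
  have h2 : finrank ℝ (LinearMap.range A.mulVecLin) = A.rank := rfl
  rw [h2, h, Module.finrank_fin_fun] at h1
  have h3 : finrank ℝ (LinearMap.ker A.mulVecLin) = 0 := by omega
  exact Submodule.finrank_eq_zero.mp h3

lemma mlpAux_surjective_of_rank {m n : ℕ} (A : Matrix (Fin m) (Fin n) ℝ) (h : A.rank = m) :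
    Function.Surjective A.mulVecLin := by
  rw [← LinearMap.range_eq_top]
  apply Submodule.eq_top_of_finrank_eq
  have h2 : finrank ℝ (LinearMap.range A.mulVecLin) = A.rank := rfl
  rw [h2, h, Module.finrank_fin_fun]

/-- The key "local affine chart" lemma, proven by induction on the depth. -/
theorem mlp_chart (alpha : ℝ) (halpha₀ : 0 < alpha)
    (dims : ℕ → ℕ) (L : ℕ)
    (W : ∀ l : ℕ, Matrix (Fin (dims (l + 1))) (Fin (dims l)) ℝ)
    (b : ∀ l : ℕ, Fin (dims (l + 1)) → ℝ)
    (hrank : ∀ l < L, (W l).rank = min (dims (l + 1)) (dims l))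
    (hmono : (∀ l < L, dims l ≤ dims (l + 1)) ∨ (∀ l < L, dims (l + 1) ≤ dims l)) :
    ∃ N : Set (Fin (dims 0) → ℝ), volume N = 0 ∧
      ∀ x ∉ N, ∃ (U : Set (Fin (dims 0) → ℝ)) (A : Matrix (Fin (dims L)) (Fin (dims 0)) ℝ)
        (c : Fin (dims L) → ℝ), IsOpen U ∧ x ∈ U ∧
        (∀ y ∈ U, mlp alpha dims W b L y = A.mulVec y + c) ∧
        A.rank = min (dims 0) (dims L) := by
  induction L with
  | zero =>
      refine ⟨∅, measure_empty, fun x _ => ⟨Set.univ, 1, 0, isOpen_univ, trivial, ?_, ?_⟩⟩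
      · intro y _
        simp [mlp, Matrix.one_mulVec]
      · simp [Matrix.rank_one]
  | succ L ih =>
      obtain ⟨N, hN, hchart⟩ := ih
        (fun l hl => hrank l (Nat.lt_succ_of_lt hl))
        (hmono.imp (fun h l hl => h l (Nat.lt_succ_of_lt hl))
          (fun h l hl => h l (Nat.lt_succ_of_lt hl)))
      set z : (Fin (dims 0) → ℝ) → Fin (dims (L + 1)) → ℝ :=
        fun y i => (W L).mulVec (mlp alpha dims W b L y) i + b L i with hzdef
      set S : Set (Fin (dims 0) → ℝ) :=
        {x | x ∉ N ∧ ∃ i, z x i = 0 ∧ ¬ ∀ᶠ y in nhds x, z y i = 0} with hSdef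
      have hS : volume S = 0 := by
        apply measure_null_of_locally_null
        intro x hxS
        obtain ⟨hxN, -⟩ := hxS
        obtain ⟨U, A, c, hU, hxU, heq, -⟩ := hchart x hxN
        set M : Matrix (Fin (dims (L + 1))) (Fin (dims 0)) ℝ := W L * A with hMdef
        set e : Fin (dims (L + 1)) → ℝ := (W L).mulVec c + b L with hedef
        have hz : ∀ y ∈ U, ∀ i, z y i = M.mulVec y i + e i := by
          intro y hy i
          simp only [hzdef, heq y hy, Matrix.mulVec_add, hMdef, hedef,
            ← Matrix.mulVec_mulVec, Pi.add_apply]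
          ring
        refine ⟨S ∩ U, inter_mem_nhdsWithin S (hU.mem_nhds hxU), ?_⟩
        have hsub : S ∩ U ⊆ ⋃ i : Fin (dims (L + 1)),
            {y | M.mulVec y i + e i = 0 ∧ ∃ v, M.mulVec v i ≠ 0} := by
          rintro y ⟨⟨hyN, i, hyi, hnev⟩, hyU⟩
          refine Set.mem_iUnion.mpr ⟨i, ?_, ?_⟩
          · rw [← hz y hyU i]; exact hyi
          · by_contra hall
            push_neg at hall
            apply hnev
            have he0 : e i = 0 := by
              have := hz y hyU i
              rw [hall y] at this
              simpa [hyi] using this.symm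
            filter_upwards [hU.mem_nhds hyU] with y' hy'
            rw [hz y' hy' i, hall y', he0, add_zero]
        refine measure_mono_null hsub (measure_iUnion_null fun i => ?_)
        by_cases hrow : ∃ v, M.mulVec v i ≠ 0
        · obtain ⟨v, hv⟩ := hrow
          set l : (Fin (dims 0) → ℝ) →ₗ[ℝ] ℝ :=
            (LinearMap.proj i).comp M.mulVecLin with hldef
          have hl : l ≠ 0 := by
            intro h0
            apply hv
            have := LinearMap.ext_iff.mp h0 v
            simpa [hldef] using this
          have hss : {y : Fin (dims 0) → ℝ | M.mulVec y i + e i = 0 ∧ ∃ v, M.mulVec v i ≠ 0}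
              ⊆ {y | l y = -e i} := by
            rintro y ⟨hy, -⟩
            simp only [Set.mem_setOf_eq, hldef, LinearMap.comp_apply, LinearMap.proj_apply,
              Matrix.mulVecLin_apply]
            linarith
          exact measure_mono_null hss (mlpAux_volume_levelSet l hl (-e i))
        · have : {y : Fin (dims 0) → ℝ | M.mulVec y i + e i = 0 ∧ ∃ v, M.mulVec v i ≠ 0}
              = ∅ := by
            ext y; simp only [Set.mem_setOf_eq, Set.mem_empty_iff_false, iff_false]
            rintro ⟨-, h⟩; exact hrow h
          simp [this]
      refine ⟨N ∪ S, measure_union_null hN hS, ?_⟩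
      intro x hx
      have hxN : x ∉ N := fun h => hx (Or.inl h)
      have hxS : x ∉ S := fun h => hx (Or.inr h)
      obtain ⟨U, A, c, hU, hxU, heq, hArk⟩ := hchart x hxN
      set M : Matrix (Fin (dims (L + 1))) (Fin (dims 0)) ℝ := W L * A with hMdef
      set e : Fin (dims (L + 1)) → ℝ := (W L).mulVec c + b L with hedef
      have hz : ∀ y ∈ U, ∀ i, z y i = M.mulVec y i + e i := by
        intro y hy i
        simp only [hzdef, heq y hy, Matrix.mulVec_add, hMdef, hedef,
          ← Matrix.mulVec_mulVec, Pi.add_apply]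
        ring
      have hcont : ∀ i, Continuous fun y : Fin (dims 0) → ℝ => M.mulVec y i + e i := by
        intro i
        exact ((continuous_apply i).comp
          M.mulVecLin.continuous_of_finiteDimensional).add continuous_const
      set v : Fin (dims (L + 1)) → ℝ := fun i => if z x i < 0 then alpha else 1 with hvdef
      have hv0 : ∀ i, v i ≠ 0 := by
        intro i
        simp only [hvdef]
        split
        · exact ne_of_gt halpha₀
        · exact one_ne_zero
      have key : ∀ i, ∃ O : Set (Fin (dims 0) → ℝ), IsOpen O ∧ x ∈ O ∧
          ∀ y ∈ O, y ∈ U → leakyReLU alpha (z y i) = v i * z y i := by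
        intro i
        rcases lt_trichotomy (z x i) 0 with hneg | hzero | hpos
        · refine ⟨{y | M.mulVec y i + e i < 0}, isOpen_lt (hcont i) continuous_const, ?_, ?_⟩
          · show M.mulVec x i + e i < 0
            rw [← hz x hxU i]; exact hneg
          · intro y hy hyU
            have hyneg : z y i < 0 := by rw [hz y hyU i]; exact hy
            have hv : v i = alpha := if_pos hneg
            rw [hv, leakyReLU, max_eq_left hyneg.le, min_eq_right hyneg.le, zero_add]
        · have hev : ∀ᶠ y in nhds x, z y i = 0 := by
            by_contra hnev
            exact hxS ⟨hxN, i, hzero, hnev⟩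
          refine ⟨interior {y | z y i = 0}, isOpen_interior,
            mem_interior_iff_mem_nhds.mpr hev, ?_⟩
          intro y hy _
          have hy0 : z y i = 0 := by simpa using interior_subset hy
          have hv : v i = 1 := if_neg (by rw [hzero]; exact lt_irrefl 0)
          rw [hy0, hv, leakyReLU]
          simp
        · refine ⟨{y | 0 < M.mulVec y i + e i}, isOpen_lt continuous_const (hcont i), ?_, ?_⟩
          · show 0 < M.mulVec x i + e i
            rw [← hz x hxU i]; exact hpos
          · intro y hy hyU
            have hypos : 0 < z y i := by rw [hz y hyU i]; exact hy
            have hv : v i = 1 := if_neg (not_lt.mpr hpos.le)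
            rw [hv, leakyReLU, max_eq_right hypos.le, min_eq_left hypos.le, one_mul,
              mul_zero, add_zero]
      choose O hOopen hOx hOval using key
      refine ⟨U ∩ ⋂ i, O i, Matrix.diagonal v * M, fun i => v i * e i,
        hU.inter (isOpen_iInter_of_finite hOopen), ⟨hxU, Set.mem_iInter.mpr hOx⟩, ?_, ?_⟩
      · rintro y ⟨hyU, hyO⟩
        funext i
        have h1 : mlp alpha dims W b (L + 1) y i = leakyReLU alpha (z y i) := rfl
        rw [h1, hOval i y (Set.mem_iInter.mp hyO i) hyU, hz y hyU i]
        simp only [← Matrix.mulVec_mulVec, Matrix.mulVec_diagonal, Pi.add_apply]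
        ring
      · have hdet : IsUnit (Matrix.diagonal v).det := by
          rw [Matrix.det_diagonal]
          exact isUnit_iff_ne_zero.mpr (Finset.prod_ne_zero_iff.mpr fun i _ => hv0 i)
        rw [Matrix.rank_mul_eq_right_of_isUnit_det _ _ hdet]
        have hcomp : M.mulVecLin = (W L).mulVecLin.comp A.mulVecLin :=
          Matrix.mulVecLin_mul _ _
        rcases hmono with hinc | hdec
        · have h0L : dims 0 ≤ dims L :=
            mlpAux_chain_le (fun l hl => hinc l (Nat.lt_succ_of_lt hl)) L le_rfl
          have hL1 : dims L ≤ dims (L + 1) := hinc L (Nat.lt_succ_self L)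
          have hAinj : Function.Injective A.mulVecLin :=
            mlpAux_injective_of_rank A (by rw [hArk, min_eq_left h0L])
          have hWinj : Function.Injective (W L).mulVecLin :=
            mlpAux_injective_of_rank (W L)
              (by rw [hrank L (Nat.lt_succ_self L), min_eq_right hL1])
          have hMinj : Function.Injective M.mulVecLin := by
            rw [hcomp]; exact hWinj.comp hAinj
          have : M.rank = dims 0 := by
            have h2 : finrank ℝ (LinearMap.range M.mulVecLin) = M.rank := rfl
            rw [← h2, LinearMap.finrank_range_of_inj hMinj, Module.finrank_fin_fun]
          rw [this, min_eq_left (h0L.trans hL1)]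
        · have hL0 : dims L ≤ dims 0 :=
            mlpAux_chain_ge (fun l hl => hdec l (Nat.lt_succ_of_lt hl)) L le_rfl
          have hL1 : dims (L + 1) ≤ dims L := hdec L (Nat.lt_succ_self L)
          have hAsurj : Function.Surjective A.mulVecLin :=
            mlpAux_surjective_of_rank A (by rw [hArk, min_eq_right hL0])
          have hWsurj : Function.Surjective (W L).mulVecLin :=
            mlpAux_surjective_of_rank (W L)
              (by rw [hrank L (Nat.lt_succ_self L), min_eq_left hL1])
          have hMsurj : Function.Surjective M.mulVecLin := by
            rw [hcomp]; exact hWsurj.comp hAsurj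
          have : M.rank = dims (L + 1) := by
            have h2 : finrank ℝ (LinearMap.range M.mulVecLin) = M.rank := rfl
            rw [← h2, LinearMap.range_eq_top.mpr hMsurj, finrank_top, Module.finrank_fin_fun]
          rw [this, min_eq_right (hL1.trans hL0)]

/-- An MLP with LeakyReLU activations (slope `α ∈ (0,1)`), full-rank weight matrices
and monotone layer dimensions is differentiable with full-rank Jacobian outside a set
of Lebesgue measure zero. -/
theorem mlp_jacobian_fullRank_ae (alpha : ℝ) (halpha₀ : 0 < alpha) (halpha₁ : alpha < 1)
    (dims : ℕ → ℕ) (L : ℕ)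
    (W : ∀ l : ℕ, Matrix (Fin (dims (l + 1))) (Fin (dims l)) ℝ)
    (b : ∀ l : ℕ, Fin (dims (l + 1)) → ℝ)
    (hrank : ∀ l < L, (W l).rank = min (dims (l + 1)) (dims l))
    (hmono : (∀ l < L, dims l ≤ dims (l + 1)) ∨ (∀ l < L, dims (l + 1) ≤ dims l)) :
    ∃ N : Set (Fin (dims 0) → ℝ), MeasureTheory.volume N = 0 ∧
      ∀ x ∉ N,
        DifferentiableAt ℝ (mlp alpha dims W b L) x ∧
        LinearMap.rank (fderiv ℝ (mlp alpha dims W b L) x).toLinearMap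
          = (min (dims 0) (dims L) : ℕ) := by
  obtain ⟨N, hN, hchart⟩ := mlp_chart alpha halpha₀ dims L W b hrank hmono
  refine ⟨N, hN, fun x hx => ?_⟩
  obtain ⟨U, A, c, hU, hxU, heq, hrk⟩ := hchart x hx
  set f' : (Fin (dims 0) → ℝ) →L[ℝ] (Fin (dims L) → ℝ) :=
    LinearMap.toContinuousLinearMap A.mulVecLin with hf'def
  have haff : HasFDerivAt (fun y => A.mulVec y + c) f' x := by
    have h1 : HasFDerivAt (⇑f') f' x := f'.hasFDerivAt
    have h2 : (fun y => A.mulVec y + c) = fun y => f' y + c := by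
      funext y
      simp [hf'def, Matrix.mulVecLin_apply]
    rw [h2]
    exact h1.add_const c
  have hf : HasFDerivAt (mlp alpha dims W b L) f' x := by
    apply haff.congr_of_eventuallyEq
    filter_upwards [hU.mem_nhds hxU] with y hy
    exact heq y hy
  refine ⟨hf.differentiableAt, ?_⟩
  rw [hf.fderiv]
  have hlin : (f' : (Fin (dims 0) → ℝ) →ₗ[ℝ] (Fin (dims L) → ℝ)) = A.mulVecLin := rfl
  rw [hlin, LinearMap.rank, ← Module.finrank_eq_rank]
  norm_cast
end

section
/- Let T = (T₁, ..., T_k) : ℝ → ℝ^k with k ≥ 2 be the differentiable sufficient statistic of a strongly exponential distribution. Then there exist k distinct points x₁, ..., x_k ∈ ℝ such that the derivative vectors T'(x₁), ..., T'(x_k) are linearly independent in ℝ^k. -/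
/-- A sufficient statistic `T : ℝ → ℝ^k` is strongly exponential if whenever
`⟨T(x), θ⟩` is constant on a subset `U ⊆ ℝ`, either `U` has Lebesgue measure zero or
`θ = 0`. -/
def StronglyExponential {k : ℕ} (T : ℝ → Fin k → ℝ) : Prop :=
  ∀ (U : Set ℝ) (θ : Fin k → ℝ),
    (∃ c : ℝ, ∀ x ∈ U, ∑ i, T x i * θ i = c) →
    MeasureTheory.volume U = 0 ∨ θ = 0

/-!
If `θ` annihilates every derivative vector `T'(x)`, then `x ↦ ⟨T(x), θ⟩` has zero derivative,
hence is constant on all of `ℝ`; since `ℝ` does not have measure zero, strong exponentiality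
forces `θ = 0`. So the derivative vectors span `ℝ^k`, and any spanning family in a
`k`-dimensional space contains `k` linearly independent members, which come from distinct points.
-/

open Module Submodule Set Matrix

theorem exists_linearIndependent_comp_of_span_range_eq_top {K V ι : Type*} [DivisionRing K]
    [AddCommGroup V] [Module K V] [FiniteDimensional K V] {n : ℕ} (hn : finrank K V = n)
    {f : ι → V} (hf : span K (range f) = ⊤) :
    ∃ x : Fin n → ι, LinearIndependent K (f ∘ x) := by
  obtain ⟨κ, a, -, hspan, hli⟩ := exists_linearIndependent' K f
  let b : Basis κ K V := Basis.mk hli (by rw [hspan, hf])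
  let e : Fin n ≃ κ := (finBasisOfFinrankEq K V hn).indexEquiv b
  exact ⟨a ∘ e, hli.comp e e.injective⟩

namespace StronglyExponential

variable {k : ℕ} {T : ℝ → Fin k → ℝ}

theorem eq_zero_of_comp_eq_const (hse : StronglyExponential T) {φ : Dual ℝ (Fin k → ℝ)}
    {c : ℝ} (hc : ∀ x, φ (T x) = c) : φ = 0 := by
  obtain ⟨θ, rfl⟩ := (dotProductEquiv ℝ (Fin k)).surjective φ
  have hθ : ∀ x ∈ univ, ∑ i, T x i * θ i = c := fun x _ => by
    rw [← hc x]
    exact dotProduct_comm (T x) θ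
  rcases hse univ θ ⟨c, hθ⟩ with h | rfl
  · simp at h
  · simp

theorem span_range_deriv_eq_top (hse : StronglyExponential T) (hT : Differentiable ℝ T) :
    span ℝ (range (deriv T)) = ⊤ := by
  rw [← dualAnnihilator_eq_bot_iff, eq_bot_iff]
  intro φ hφ
  let L : (Fin k → ℝ) →L[ℝ] ℝ := LinearMap.toContinuousLinearMap φ
  have hderiv : ∀ x, deriv (L ∘ T) x = 0 := fun x => by
    rw [(L.hasFDerivAt.comp_hasDerivAt x (hT x).hasDerivAt).deriv]
    exact (mem_dualAnnihilator φ).1 hφ _ (subset_span ⟨x, rfl⟩)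
  exact hse.eq_zero_of_comp_eq_const fun x =>
    is_const_of_deriv_eq_zero (L.differentiable.comp hT) hderiv x 0

end StronglyExponential

theorem stronglyExponential_deriv_linearIndependent_general {k : ℕ}
    (T : ℝ → Fin k → ℝ)
    (hdiff : ∀ i, Differentiable ℝ (fun x => T x i))
    (hse : StronglyExponential T) :
    ∃ x : Fin k → ℝ, Function.Injective x ∧
      LinearIndependent ℝ (fun i : Fin k => fun j : Fin k =>
        deriv (fun t => T t j) (x i)) := by
  have hderiv : deriv T = fun x j => deriv (fun t => T t j) x :=
    funext fun x => deriv_pi fun j => hdiff j x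
  obtain ⟨x, hx⟩ := exists_linearIndependent_comp_of_span_range_eq_top
    (finrank_fin_fun ℝ) (hse.span_range_deriv_eq_top (differentiable_pi.2 hdiff))
  rw [hderiv] at hx
  exact ⟨x, hx.injective.of_comp, hx⟩

/-- For a differentiable strongly exponential sufficient statistic `T : ℝ → ℝ^k` with
`k ≥ 2`, there exist `k` distinct points `x₁, …, x_k` such that the derivative vectors
`T'(x₁), …, T'(x_k)` are linearly independent in `ℝ^k`. -/
theorem stronglyExponential_deriv_linearIndependent {k : ℕ} (hk : 2 ≤ k)
    (T : ℝ → Fin k → ℝ)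
    (hdiff : ∀ i, Differentiable ℝ (fun x => T x i))
    (hse : StronglyExponential T) :
    ∃ x : Fin k → ℝ, Function.Injective x ∧
      LinearIndependent ℝ (fun i : Fin k => fun j : Fin k =>
        deriv (fun t => T t j) (x i)) :=
  stronglyExponential_deriv_linearIndependent_general T hdiff hse
end

section
/- Suppose two conditional densities of the form p_θ(x|y) = Z(y;θ)⁻¹ exp(−f_θ(x)ᵀg_θ(y)) and p_θ'(x|y) = Z(y;θ')⁻¹ exp(−f_θ'(x)ᵀg_θ'(y)) are equal for all (x,y), with feature maps f_θ, f_θ' : ℝ^d → ℝⁿ and g_θ, g_θ' : ℝ^m → ℝⁿ. If there exist n+1 points y⁰,...,yⁿ such that the n×n matrix R = (g_θ(y¹)−g_θ(y⁰), ..., g_θ(yⁿ)−g_θ(y⁰)) is invertible, then there exist an n×n matrix A and a vector c ∈ ℝⁿ with f_θ(x) = A f_θ'(x) + c for all x. If moreover f_θ is differentiable with full-rank Jacobian, then rank(A) ≥ min(n,d). -/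
/-!
Equality of the densities makes the energy difference `f'(x)ᵀg'(y) − f(x)ᵀg(y)` a function of `y`
alone, namely `log Z(y) − log Z'(y)`. Subtracting this identity at `y⁰` from the one at `yʲ` gives
`Rᵀ f(x) = R'ᵀ f'(x) + w`, which is solved for `f` since `R` is invertible. The increments of `f`
then lie in the range of `A`, a closed subspace, hence so does the range of every derivative of `f`.
-/

open Matrix

theorem sub_eq_log_sub_log_of_exp_neg_div_eq {a b Z Z' : ℝ} (hZ : 0 < Z) (hZ' : 0 < Z')
    (h : Real.exp (-a) / Z = Real.exp (-b) / Z') : b - a = Real.log Z - Real.log Z' := by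
  have hlog := congrArg Real.log h
  rw [Real.log_div (Real.exp_ne_zero _) hZ.ne', Real.log_div (Real.exp_ne_zero _) hZ'.ne',
    Real.log_exp, Real.log_exp] at hlog
  linarith

theorem exists_eq_mulVec_add_of_dotProduct_sub_eq {X Y ι : Type*} [Fintype ι] [DecidableEq ι]
    {f f' : X → ι → ℝ} {g g' : Y → ι → ℝ} {L : Y → ℝ}
    (h : ∀ x y, f' x ⬝ᵥ g' y - f x ⬝ᵥ g y = L y) (y₀ : Y) (y : ι → Y)
    (hR : IsUnit (Matrix.of fun i j => g (y j) i - g y₀ i).det) :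
    ∃ (A : Matrix ι ι ℝ) (c : ι → ℝ), ∀ x, f x = A *ᵥ f' x + c := by
  set R : Matrix ι ι ℝ := Matrix.of fun i j => g (y j) i - g y₀ i
  set R' : Matrix ι ι ℝ := Matrix.of fun i j => g' (y j) i - g' y₀ i
  set w : ι → ℝ := fun j => L y₀ - L (y j)
  have hvecMul : ∀ x, f x ᵥ* R = f' x ᵥ* R' + w := by
    intro x
    ext j
    have hj : ∀ (u : ι → ℝ) (v : Y → ι → ℝ),
        (u ᵥ* Matrix.of fun i j => v (y j) i - v y₀ i) j = u ⬝ᵥ v (y j) - u ⬝ᵥ v y₀ := by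
      intro u v
      rw [← dotProduct_sub]
      rfl
    simp only [Pi.add_apply, R, R', w, hj]
    linarith [h x (y j), h x y₀]
  refine ⟨(R' * R⁻¹)ᵀ, w ᵥ* R⁻¹, fun x => ?_⟩
  rw [mulVec_transpose, ← vecMul_vecMul, ← add_vecMul, ← hvecMul, vecMul_vecMul,
    mul_nonsing_inv _ hR, vecMul_one]

theorem range_fderiv_le_of_sub_mem {E F : Type*} [NormedAddCommGroup E] [NormedSpace ℝ E]
    [NormedAddCommGroup F] [NormedSpace ℝ F] {f : E → F} {U : Submodule ℝ F}
    (hU : IsClosed (U : Set F)) (hfU : ∀ x y, f x - f y ∈ U) {x : E}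
    (hf : DifferentiableAt ℝ f x) :
    LinearMap.range (fderiv ℝ f x : E →ₗ[ℝ] F) ≤ U := by
  rintro _ ⟨v, rfl⟩
  exact hU.mem_of_tendsto (hf.hasFDerivAt.lim_real v)
    (.of_forall fun t => U.smul_mem t (hfU _ _))

theorem rank_fderiv_le_rank_of_eq_mulVec_add {E ι κ : Type*} [NormedAddCommGroup E]
    [NormedSpace ℝ E] [Fintype ι] [Fintype κ] {f : E → ι → ℝ} {f' : E → κ → ℝ}
    {A : Matrix ι κ ℝ} {c : ι → ℝ} (hfA : ∀ x, f x = A *ᵥ f' x + c) {x : E}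
    (hf : DifferentiableAt ℝ f x) :
    (fderiv ℝ f x : E →ₗ[ℝ] ι → ℝ).rank ≤ A.rank := by
  have hsub : ∀ x y, f x - f y ∈ LinearMap.range A.mulVecLin := fun x y =>
    ⟨f' x - f' y, by simp [hfA, mulVec_sub]⟩
  rw [Matrix.rank, Module.finrank_eq_rank]
  exact Submodule.rank_mono
    (range_fderiv_le_of_sub_mem (Submodule.closed_of_finiteDimensional _) hsub hf)

theorem icebeem_weak_identifiability_general {d m n : ℕ}
    (f f' : (Fin d → ℝ) → Fin n → ℝ) (g g' : (Fin m → ℝ) → Fin n → ℝ)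
    (Z Z' : (Fin m → ℝ) → ℝ)
    (hZpos : ∀ y, 0 < Z y) (hZ'pos : ∀ y, 0 < Z' y)
    (heq : ∀ x y, Real.exp (-(∑ i, f x i * g y i)) / Z y
        = Real.exp (-(∑ i, f' x i * g' y i)) / Z' y)
    (ypts : Fin (n + 1) → (Fin m → ℝ))
    (hR : IsUnit (Matrix.of (fun i j : Fin n => g (ypts j.succ) i - g (ypts 0) i)).det) :
    ∃ (A : Matrix (Fin n) (Fin n) ℝ) (c : Fin n → ℝ),
      (∀ x, f x = A.mulVec (f' x) + c) ∧
      ((Differentiable ℝ f ∧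
          ∀ x, LinearMap.rank (fderiv ℝ f x).toLinearMap = (min n d : ℕ)) →
        min n d ≤ A.rank) := by
  have henergy : ∀ x y, f' x ⬝ᵥ g' y - f x ⬝ᵥ g y = Real.log (Z y) - Real.log (Z' y) :=
    fun x y => sub_eq_log_sub_log_of_exp_neg_div_eq (hZpos y) (hZ'pos y) (heq x y)
  obtain ⟨A, c, hfA⟩ :=
    exists_eq_mulVec_add_of_dotProduct_sub_eq henergy (ypts 0) (fun j => ypts j.succ) hR
  refine ⟨A, c, hfA, fun ⟨hf, hrank⟩ => ?_⟩
  have hle := rank_fderiv_le_rank_of_eq_mulVec_add hfA (hf 0)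
  rw [hrank] at hle
  exact_mod_cast hle

/-- Weak identifiability of the conditional energy-based model
`p_θ(x|y) = Z(y;θ)⁻¹ exp(−f_θ(x)ᵀg_θ(y))`: if two such models define the same
conditional density and there exist `n+1` points `y⁰, …, yⁿ` for which the matrix
`R = (g(y¹)−g(y⁰), …, g(yⁿ)−g(y⁰))` is invertible, then `f = A f' + c` for some matrix
`A` and vector `c`; if moreover `f` is differentiable with full-rank Jacobian, then
`rank(A) ≥ min(n,d)`. -/
theorem icebeem_weak_identifiability {d m n : ℕ}
    (f f' : (Fin d → ℝ) → Fin n → ℝ) (g g' : (Fin m → ℝ) → Fin n → ℝ)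
    (Z Z' : (Fin m → ℝ) → ℝ)
    (hZ : ∀ y, Z y = ∫ x : Fin d → ℝ, Real.exp (-(∑ i, f x i * g y i)))
    (hZ' : ∀ y, Z' y = ∫ x : Fin d → ℝ, Real.exp (-(∑ i, f' x i * g' y i)))
    (hZpos : ∀ y, 0 < Z y) (hZ'pos : ∀ y, 0 < Z' y)
    (heq : ∀ x y, Real.exp (-(∑ i, f x i * g y i)) / Z y
        = Real.exp (-(∑ i, f' x i * g' y i)) / Z' y)
    (ypts : Fin (n + 1) → (Fin m → ℝ))
    (hR : IsUnit (Matrix.of (fun i j : Fin n => g (ypts j.succ) i - g (ypts 0) i)).det) :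
    ∃ (A : Matrix (Fin n) (Fin n) ℝ) (c : Fin n → ℝ),
      (∀ x, f x = A.mulVec (f' x) + c) ∧
      ((Differentiable ℝ f ∧
          ∀ x, LinearMap.rank (fderiv ℝ f x).toLinearMap = (min n d : ℕ)) →
        min n d ≤ A.rank) :=
  icebeem_weak_identifiability_general f f' g g' Z Z' hZpos hZ'pos heq ypts hR
end

section
/- Let f, f̃ : ℝ^d → ℝⁿ (n ≤ d) be surjective functions onto the non-negative orthant ℝⁿ₊ such that f(x) = A f̃(x) + c for all x, where A is an invertible n×n matrix and c ∈ ℝⁿ. Then A is a scaled permutation matrix composed with sign structure forced by non-negativity: there exist a permutation σ of {1,...,n} and non-zero scalars a_i and scalars b_i such that f_i(x) = a_i f̃_{σ(i)}(x) + b_i for all x and all i. -/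
private lemma aux_nonneg {x y : ℝ} (h : ∀ t : ℝ, 0 < t → y ≤ t * x) : 0 ≤ x := by
  by_contra hx
  push_neg at hx
  have hxne : x ≠ 0 := ne_of_lt hx
  have ht : 0 < (|y| + 1) / (-x) := div_pos (by positivity) (by linarith)
  have h1 := h _ ht
  have key : (|y| + 1) / (-x) * x = -(|y| + 1) := by
    rw [div_mul_eq_mul_div, div_neg, mul_div_assoc, div_self hxne]; ring
  rw [key] at h1
  have := neg_abs_le y
  linarith

private lemma det_zero_of_smul_row {n : ℕ} (M : Matrix (Fin n) (Fin n) ℝ) {i j : Fin n}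
    (hij : i ≠ j) (t : ℝ) (h : M j = t • M i) : M.det = 0 := by
  have h2 : M = M.updateRow j (t • M i) := by rw [← h, Matrix.updateRow_eq_self]
  rw [h2, Matrix.det_updateRow_smul, Matrix.det_updateRow_eq_zero hij, mul_zero]

/-- If `f, f̃ : ℝ^d → ℝⁿ` (`n ≤ d`) both have image exactly the non-negative orthant
`ℝⁿ₊` and are related by `f = A f̃ + c` for an invertible matrix `A`, then each
component of `f` is an affine function of a single component of `f̃`: there exist a
permutation `σ`, non-zero scalars `aᵢ` and scalars `bᵢ` with
`fᵢ(x) = aᵢ f̃_{σ(i)}(x) + bᵢ` for all `x`. -/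
theorem nonneg_orthant_affine_perm {d n : ℕ} (hnd : n ≤ d)
    (f f' : (Fin d → ℝ) → Fin n → ℝ)
    (hf : Set.range f = {v : Fin n → ℝ | ∀ i, 0 ≤ v i})
    (hf' : Set.range f' = {v : Fin n → ℝ | ∀ i, 0 ≤ v i})
    (A : Matrix (Fin n) (Fin n) ℝ) (hA : IsUnit A.det) (c : Fin n → ℝ)
    (hrel : ∀ x, f x = A.mulVec (f' x) + c) :
    ∃ (σ : Equiv.Perm (Fin n)) (a : Fin n → ℝ) (b : Fin n → ℝ),
      (∀ i, a i ≠ 0) ∧ ∀ i x, f x i = a i * f' x (σ i) + b i := by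
  have hAB : A * A⁻¹ = 1 := A.mul_nonsing_inv hA
  have hBA : A⁻¹ * A = 1 := A.nonsing_inv_mul hA
  have hmemf : ∀ v : Fin n → ℝ, (∀ i, 0 ≤ v i) → ∃ x, f x = v := by
    intro v hv
    have : v ∈ Set.range f := by rw [hf]; exact hv
    exact this
  have hmemf' : ∀ v : Fin n → ℝ, (∀ i, 0 ≤ v i) → ∃ x, f' x = v := by
    intro v hv
    have : v ∈ Set.range f' := by rw [hf']; exact hv
    exact this
  have hranf : ∀ x i, 0 ≤ f x i := by
    intro x i
    have : f x ∈ Set.range f := ⟨x, rfl⟩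
    rw [hf] at this
    exact this i
  have hranf' : ∀ x i, 0 ≤ f' x i := by
    intro x i
    have : f' x ∈ Set.range f' := ⟨x, rfl⟩
    rw [hf'] at this
    exact this i
  -- A maps the orthant into the orthant
  have hAw : ∀ w : Fin n → ℝ, (∀ j, 0 ≤ w j) → ∀ i, 0 ≤ A.mulVec w i := by
    intro w hw i
    apply aux_nonneg (y := -c i)
    intro t ht
    obtain ⟨x, hx⟩ := hmemf' (t • w) (fun j => by
      simpa [smul_eq_mul] using mul_nonneg ht.le (hw j))
    have h3 := hranf x i
    rw [hrel x, Pi.add_apply, hx, Matrix.mulVec_smul] at h3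
    simp only [Pi.smul_apply, smul_eq_mul] at h3
    linarith
  have hAent : ∀ i j, 0 ≤ A i j := by
    intro i j
    have := hAw (Pi.single j 1) (fun k => by
      rcases eq_or_ne k j with h | h <;> simp [Pi.single_apply, h]) i
    simpa [Matrix.mulVec_single] using this
  -- A⁻¹ maps the orthant into the orthant
  have hBv : ∀ v : Fin n → ℝ, (∀ i, 0 ≤ v i) → ∀ i, 0 ≤ (A⁻¹).mulVec v i := by
    intro v hv i
    apply aux_nonneg (y := (A⁻¹).mulVec c i)
    intro t ht
    obtain ⟨x, hx⟩ := hmemf (t • v) (fun j => by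
      simpa [smul_eq_mul] using mul_nonneg ht.le (hv j))
    rw [hrel x] at hx
    have h1 : A.mulVec (f' x) = t • v - c := by
      rw [← hx]; abel
    have h2 : f' x = (A⁻¹).mulVec (t • v - c) := by
      rw [← h1, Matrix.mulVec_mulVec, hBA, Matrix.one_mulVec]
    have h3 := hranf' x i
    rw [h2] at h3
    rw [Matrix.mulVec_sub, Matrix.mulVec_smul] at h3
    simp only [Pi.sub_apply, Pi.smul_apply, smul_eq_mul] at h3
    linarith
  have hBent : ∀ i j, 0 ≤ A⁻¹ i j := by
    intro i j
    have := hBv (Pi.single j 1) (fun k => by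
      rcases eq_or_ne k j with h | h <;> simp [Pi.single_apply, h]) i
    simpa [Matrix.mulVec_single] using this
  -- each row of A has a nonzero entry
  have hex : ∀ i, ∃ j, A i j ≠ 0 := by
    intro i
    by_contra h
    push_neg at h
    exact hA.ne_zero (Matrix.det_eq_zero_of_row_eq_zero i h)
  -- off-diagonal products vanish
  have hzero : ∀ i k, i ≠ k → ∀ j, A i j * A⁻¹ j k = 0 := by
    intro i k hik j
    have hsum : ∑ l, A i l * A⁻¹ l k = 0 := by
      have h := congrFun (congrFun hAB i) k
      rwa [Matrix.mul_apply, Matrix.one_apply_ne hik] at h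
    exact (Finset.sum_eq_zero_iff_of_nonneg
      (fun l _ => mul_nonneg (hAent i l) (hBent l k))).mp hsum j (Finset.mem_univ j)
  -- uniqueness of the nonzero entry in each row of A
  have huniq : ∀ i j j', A i j ≠ 0 → A i j' ≠ 0 → j = j' := by
    intro i j j' hj hj'
    by_contra hjj'
    have hBrow : ∀ l, A i l ≠ 0 → ∀ k, k ≠ i → A⁻¹ l k = 0 := by
      intro l hl k hk
      have := hzero i k (Ne.symm hk) l
      exact (mul_eq_zero.mp this).resolve_left hl
    have hBji : A⁻¹ j i ≠ 0 := by
      intro h0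
      apply (A.isUnit_nonsing_inv_det hA).ne_zero
      apply Matrix.det_eq_zero_of_row_eq_zero j
      intro k
      rcases eq_or_ne k i with rfl | hk
      · exact h0
      · exact hBrow j hj k hk
    have hprop : A⁻¹ j' = (A⁻¹ j' i / A⁻¹ j i) • A⁻¹ j := by
      funext k
      rcases eq_or_ne k i with rfl | hk
      · simp [div_mul_cancel₀ _ hBji]
      · simp [hBrow j hj k hk, hBrow j' hj' k hk]
    exact (A.isUnit_nonsing_inv_det hA).ne_zero
      (det_zero_of_smul_row A⁻¹ hjj' _ hprop)
  -- define g
  choose g hg using hex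
  have hsupp : ∀ i j, j ≠ g i → A i j = 0 := by
    intro i j hj
    by_contra h
    exact hj (huniq i j (g i) h (hg i))
  have hinj : Function.Injective g := by
    intro i i' hii'
    by_contra hne
    have hprop : A i' = (A i' (g i) / A i (g i)) • A i := by
      funext k
      rcases eq_or_ne k (g i) with rfl | hk
      · simp [div_mul_cancel₀ _ (hg i)]
      · have hk' : k ≠ g i' := by rw [← hii']; exact hk
        simp [hsupp i k hk, hsupp i' k hk']
    exact hA.ne_zero (det_zero_of_smul_row A hne _ hprop)
  refine ⟨Equiv.ofBijective g (Finite.injective_iff_bijective.mp hinj),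
    fun i => A i (g i), c, fun i => hg i, ?_⟩
  intro i x
  have hmv : A.mulVec (f' x) i = A i (g i) * f' x (g i) := by
    rw [Matrix.mulVec, dotProduct]
    exact Finset.sum_eq_single (g i)
      (fun j _ hj => by rw [hsupp i j hj, zero_mul])
      (fun h => absurd (Finset.mem_univ _) h)
  rw [hrel x, Pi.add_apply, hmv]
  rfl
end
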